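/- arXiv:2503.08176 — 5 statements merged into one kernel-verified Lean document; each statement's English description precedes it below -/
import Mathlib

section
/- For every r ≥ 1 and every tuple (k₁,…,k_r) of positive integers, the defining congruence system of A_r°(3,1,0) holds if and only if the defining congruence system of A_r°(3,2,0) holds, and both are equivalent to: 𝕂_{i−1}(k₂,…,k_i) ≢ 2 (mod 3) for i = 1,…,r−1 and 𝕂_{r−1}(k₂,…,k_r) ≡ 2 (mod 3). Consequently A_r°(3,1,0) = A_r°(3,2,0); in particular, for r = 1 these sets are empty. -/
open MeasureTheory

/-- The BCZ transform T(x,y) = (y, ⌊(1+x)/y⌋·y − x). -/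
noncomputable def bcz (p : ℝ × ℝ) : ℝ × ℝ :=
  (p.2, (⌊(1 + p.1) / p.2⌋ : ℝ) * p.2 - p.1)

/-- The Farey triangle 𝒯 = {(x,y) : 0 < x ≤ 1, 0 < y ≤ 1, x + y > 1}. -/
def fareyTriangle : Set (ℝ × ℝ) :=
  {p | 0 < p.1 ∧ p.1 ≤ 1 ∧ 0 < p.2 ∧ p.2 ≤ 1 ∧ 1 < p.1 + p.2}

/-- The region 𝒯(k) = {(x,y) ∈ 𝒯 : ⌊(1+x)/y⌋ = k}. -/
def TT (k : ℕ) : Set (ℝ × ℝ) :=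
  {p | p ∈ fareyTriangle ∧ ⌊(1 + p.1) / p.2⌋ = (k : ℤ)}

/-- The region 𝒯(k₁,…,k_r) = 𝒯(k₁) ∩ T⁻¹(𝒯(k₂)) ∩ ⋯ ∩ T^{−(r−1)}(𝒯(k_r)). -/
noncomputable def TTlist (ks : List ℕ) : Set (ℝ × ℝ) :=
  ⋂ i : Fin ks.length, (bcz^[i.1]) ⁻¹' TT (ks.get i)

/-- The continuant 𝕂: 𝕂() = 1, 𝕂(k) = k, and
𝕂(k₁,…,k_r) = k₁·𝕂(k₂,…,k_r) + 𝕂(k₃,…,k_r). -/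
def cont : List ℕ → ℤ
  | [] => 1
  | [k] => (k : ℤ)
  | k :: m :: l => (k : ℤ) * cont (m :: l) + cont l

/-- The set A_r°(D,c₀,c₁): tuples (k₁,…,k_r) of positive integers with 𝒯(k₁,…,k_r) nonempty,
c₁·𝕂_i(k₁,…,k_i) − c₀·𝕂_{i−1}(k₂,…,k_i) ≢ c₀ (mod D) for i = 1,…,r−1, and
c₁·𝕂_r(k₁,…,k_r) − c₀·𝕂_{r−1}(k₂,…,k_r) ≡ c₀ (mod D). -/
noncomputable def Acirc (r D c0 c1 : ℕ) : Set (List ℕ) :=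
  {ks | ks.length = r ∧ (∀ k ∈ ks, 0 < k) ∧ (TTlist ks).Nonempty ∧
    (∀ i, 1 ≤ i → i < r →
      ¬ ((c1 : ℤ) * cont (ks.take i) - (c0 : ℤ) * cont ((ks.take i).drop 1)
          ≡ (c0 : ℤ) [ZMOD (D : ℤ)])) ∧
    ((c1 : ℤ) * cont ks - (c0 : ℤ) * cont (ks.drop 1) ≡ (c0 : ℤ) [ZMOD (D : ℤ)])}

lemma iff1 (c x : ℤ) : (0 * c - 1 * x ≡ 1 [ZMOD 3]) ↔ (x ≡ 2 [ZMOD 3]) := by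
  unfold Int.ModEq; omega

lemma iff2 (c x : ℤ) : (0 * c - 2 * x ≡ 2 [ZMOD 3]) ↔ (x ≡ 2 [ZMOD 3]) := by
  unfold Int.ModEq; omega

/-- The defining congruence systems of A_r°(3,1,0) and A_r°(3,2,0) are equivalent, both being
equivalent to: 𝕂_{i−1}(k₂,…,k_i) ≢ 2 (mod 3) for i < r and 𝕂_{r−1}(k₂,…,k_r) ≡ 2 (mod 3).
Consequently A_r°(3,1,0) = A_r°(3,2,0); in particular, for r = 1 these sets are empty. -/
theorem Acirc_310_eq_320 (r : ℕ) (hr : 1 ≤ r) (ks : List ℕ) (hlen : ks.length = r)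
    (hpos : ∀ k ∈ ks, 0 < k) :
    (((∀ i, 1 ≤ i → i < r →
          ¬ (0 * cont (ks.take i) - 1 * cont ((ks.take i).drop 1) ≡ 1 [ZMOD 3])) ∧
        (0 * cont ks - 1 * cont (ks.drop 1) ≡ 1 [ZMOD 3])) ↔
      ((∀ i, 1 ≤ i → i < r →
          ¬ (0 * cont (ks.take i) - 2 * cont ((ks.take i).drop 1) ≡ 2 [ZMOD 3])) ∧
        (0 * cont ks - 2 * cont (ks.drop 1) ≡ 2 [ZMOD 3]))) ∧
    (((∀ i, 1 ≤ i → i < r →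
          ¬ (0 * cont (ks.take i) - 1 * cont ((ks.take i).drop 1) ≡ 1 [ZMOD 3])) ∧
        (0 * cont ks - 1 * cont (ks.drop 1) ≡ 1 [ZMOD 3])) ↔
      ((∀ i, 1 ≤ i → i < r →
          ¬ (cont ((ks.take i).drop 1) ≡ 2 [ZMOD 3])) ∧
        (cont (ks.drop 1) ≡ 2 [ZMOD 3]))) ∧
    Acirc r 3 1 0 = Acirc r 3 2 0 ∧
    Acirc 1 3 1 0 = ∅ := by
  refine ⟨by simp only [iff1, iff2], by simp only [iff1, iff2], ?_, ?_⟩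
  · ext l
    simp only [Acirc, Set.mem_setOf_eq, Nat.cast_ofNat, Nat.cast_one, Nat.cast_two,
      Nat.cast_zero, iff1, iff2]
  · ext l
    simp only [Acirc, Set.mem_setOf_eq, Set.mem_empty_iff_false, iff_false, not_and,
      Nat.cast_one, Nat.cast_zero, Nat.cast_ofNat]
    intro hl _ _ _
    rw [iff1]
    have : l.drop 1 = [] := by
      rw [List.drop_eq_nil_iff]; omega
    rw [this]
    show ¬ cont [] ≡ 2 [ZMOD 3]
    unfold Int.ModEq cont
    decide
end

section
/- For positive integers k, m, the region 𝒯(k,m) is empty if and only if the pair (k,m) satisfies one of the following: (a) m = 1 and k = 1; (b) m = 2 and k ≥ 5; (c) m ∈ {3,4} and k ≥ 3; (d) m ≥ 5 and k ≥ 2. -/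
open MeasureTheory

lemma pair_mem (k m : ℕ) (p : ℝ × ℝ) :
    p ∈ TTlist [k, m] ↔ p ∈ TT k ∧ bcz p ∈ TT m := by
  simp [TTlist, Fin.forall_fin_two]

lemma mem_TT_of {k : ℕ} {x y : ℝ} (hx0 : 0 < x) (hx1 : x ≤ 1) (hy0 : 0 < y)
    (hy1 : y ≤ 1) (hxy : 1 < x + y) (h1 : (k : ℝ) * y ≤ 1 + x)
    (h2 : 1 + x < ((k : ℝ) + 1) * y) : (x, y) ∈ TT k := by
  refine ⟨⟨hx0, hx1, hy0, hy1, hxy⟩, ?_⟩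
  rw [Int.floor_eq_iff]
  constructor
  · push_cast; rw [le_div_iff₀ hy0]; exact h1
  · push_cast; rw [div_lt_iff₀ hy0]; linarith

lemma bcz_of_mem {k : ℕ} {x y : ℝ} (h : (x, y) ∈ TT k) :
    bcz (x, y) = (y, (k : ℝ) * y - x) := by
  have := h.2; simp [bcz, this]

lemma mem_TT_elim {k : ℕ} {x y : ℝ} (h : (x, y) ∈ TT k) :
    0 < x ∧ x ≤ 1 ∧ 0 < y ∧ y ≤ 1 ∧ 1 < x + y ∧
      (k : ℝ) * y ≤ 1 + x ∧ 1 + x < ((k : ℝ) + 1) * y := by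
  obtain ⟨⟨hx0, hx1, hy0, hy1, hxy⟩, hf⟩ := h
  rw [Int.floor_eq_iff] at hf
  push_cast at hf
  refine ⟨hx0, hx1, hy0, hy1, hxy, (le_div_iff₀ hy0).mp hf.1, ?_⟩
  have := (div_lt_iff₀ hy0).mp hf.2; linarith

lemma pair_elim {k m : ℕ} {p : ℝ × ℝ} (h : p ∈ TTlist [k, m]) :
    ∃ x y : ℝ, 0 < x ∧ x ≤ 1 ∧ 0 < y ∧ y ≤ 1 ∧ 1 < x + y ∧
      (k : ℝ) * y ≤ 1 + x ∧ 1 + x < ((k : ℝ) + 1) * y ∧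
      0 < (k : ℝ) * y - x ∧ (k : ℝ) * y - x ≤ 1 ∧ 1 < y + ((k : ℝ) * y - x) ∧
      (m : ℝ) * ((k : ℝ) * y - x) ≤ 1 + y ∧
      1 + y < ((m : ℝ) + 1) * ((k : ℝ) * y - x) := by
  obtain ⟨h1, h2⟩ := (pair_mem k m p).mp h
  obtain ⟨x, y⟩ := p
  have hb := bcz_of_mem h1
  rw [hb] at h2
  obtain ⟨hx0, hx1, hy0, hy1, hxy, hk1, hk2⟩ := mem_TT_elim h1
  obtain ⟨ha0, ha1, hb0, hb1, hab, hm1, hm2⟩ := mem_TT_elim h2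
  exact ⟨x, y, hx0, hx1, hy0, hy1, hxy, hk1, hk2, hb0, hb1, hab, hm1, hm2⟩

lemma empty_of_ineq {k m : ℕ} (hm : 1 ≤ m)
    (h : ((m : ℝ) + 1) ^ 2 ≤ ((m : ℝ) - 1) * ((m : ℝ) * k - 1)) :
    TTlist [k, m] = ∅ := by
  rw [Set.eq_empty_iff_forall_notMem]
  intro p hp
  obtain ⟨x, y, hx0, hx1, hy0, hy1, hxy, hk1, hk2, ha0, ha1, hab, hm1, hm2⟩ := pair_elim hp
  have hm' : (1 : ℝ) ≤ (m : ℝ) := by exact_mod_cast hm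
  have hA : ((m : ℝ) - 1) < ((m : ℝ) + 1) * y := by
    nlinarith [mul_le_mul_of_nonneg_left (le_of_lt hab) (by linarith : (0:ℝ) ≤ (m:ℝ))]
  have hB : ((m : ℝ) * k - 1) * y ≤ (m : ℝ) + 1 := by nlinarith
  have hmk : (0 : ℝ) ≤ (m : ℝ) * k - 1 := by
    nlinarith [sq_nonneg ((m:ℝ) + 1)]
  nlinarith [mul_le_mul_of_nonneg_left hB (by linarith : (0:ℝ) ≤ (m:ℝ) + 1),
    mul_le_mul_of_nonneg_left (le_of_lt hA) hmk]

lemma empty_11 : TTlist [1, 1] = ∅ := by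
  rw [Set.eq_empty_iff_forall_notMem]
  intro p hp
  obtain ⟨x, y, hx0, hx1, hy0, hy1, hxy, hk1, hk2, ha0, ha1, hab, hm1, hm2⟩ := pair_elim hp
  push_cast at hm2
  linarith

lemma pair_mem_of {k m : ℕ} {x y : ℝ} (h1 : (x, y) ∈ TT k)
    (h2 : (y, (k : ℝ) * y - x) ∈ TT m) : (x, y) ∈ TTlist [k, m] := by
  rw [pair_mem]
  exact ⟨h1, by rw [bcz_of_mem h1]; exact h2⟩

lemma nonempty_k1 (m : ℕ) (hm : 2 ≤ m) : (TTlist [1, m]).Nonempty := by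
  have hM : (2 : ℝ) ≤ (m : ℝ) := by exact_mod_cast hm
  set M := (m : ℝ)
  refine ⟨((2 * M - 3) / (2 * M + 1), 1), pair_mem_of ?_ ?_⟩
  · have hd : (0 : ℝ) < 2 * M + 1 := by linarith
    have hx0 : (0 : ℝ) < (2 * M - 3) / (2 * M + 1) := by
      apply div_pos <;> linarith
    have hx1 : (2 * M - 3) / (2 * M + 1) < 1 := by
      rw [div_lt_one hd]; linarith
    exact mem_TT_of hx0 hx1.le one_pos le_rfl (by linarith) (by push_cast; linarith)
      (by push_cast; linarith)
  · have hd : (0 : ℝ) < 2 * M + 1 := by linarith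
    have he : (1 : ℝ) * 1 - (2 * M - 3) / (2 * M + 1) = 4 / (2 * M + 1) := by
      field_simp; ring
    push_cast
    rw [he]
    have ha0 : (0 : ℝ) < 4 / (2 * M + 1) := by positivity
    have ha1 : (4 : ℝ) / (2 * M + 1) ≤ 1 := by rw [div_le_one hd]; linarith
    refine mem_TT_of one_pos le_rfl ha0 ha1 (by linarith) ?_ ?_
    · rw [mul_div_assoc', div_le_iff₀ hd]; linarith
    · rw [mul_div_assoc', lt_div_iff₀ hd]; linarith

lemma nonempty_m1 (k : ℕ) (hk : 2 ≤ k) : (TTlist [k, 1]).Nonempty := by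
  have hK : (2 : ℝ) ≤ (k : ℝ) := by exact_mod_cast hk
  set K := (k : ℝ)
  have hK0 : (0 : ℝ) < K := by linarith
  have hK1 : (0 : ℝ) < K + 1 := by linarith
  have hKden : (0 : ℝ) < K * (K + 1) := by positivity
  set x : ℝ := K / (K + 1) with hxdef
  set y : ℝ := (2 * K + 1) / (K * (K + 1)) with hydef
  have hx0 : 0 < x := by apply div_pos <;> linarith
  have hx1 : x < 1 := by rw [hxdef, div_lt_one hK1]; linarith
  have hy0 : 0 < y := by apply div_pos <;> nlinarith
  have hy1 : y < 1 := by rw [hydef, div_lt_one hKden]; nlinarith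
  have hky : K * y - x = 1 := by rw [hxdef, hydef]; field_simp; ring
  have h1x : 1 + x = (2 * K + 1) / (K + 1) := by rw [hxdef]; field_simp; ring
  refine ⟨(x, y), pair_mem_of ?_ ?_⟩
  · refine mem_TT_of hx0 hx1.le hy0 hy1.le ?_ ?_ ?_
    · have : x + y = (K + 1) / K := by rw [hxdef, hydef]; field_simp; ring
      rw [this, lt_div_iff₀ hK0]; linarith
    · have : K * y = 1 + x := by linarith [hky]
      linarith [hx0]
    · have : (K + 1) * y = (2 * K + 1) / K := by
        rw [hydef]; field_simp
      rw [this, h1x, div_lt_div_iff₀ hK1 hK0]; nlinarith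
  · rw [hky]
    refine mem_TT_of hy0 hy1.le one_pos le_rfl (by linarith) (by push_cast; linarith)
      (by push_cast; linarith)

lemma nonempty_22 : (TTlist [2, 2]).Nonempty := by
  refine ⟨(1, 1), pair_mem_of ?_ ?_⟩ <;>
  · apply mem_TT_of <;> norm_num

lemma nonempty_32 : (TTlist [3, 2]).Nonempty := by
  refine ⟨(3/4, 1/2), pair_mem_of ?_ ?_⟩ <;>
  · apply mem_TT_of <;> norm_num

lemma nonempty_42 : (TTlist [4, 2]).Nonempty := by
  refine ⟨(9/10, 2/5), pair_mem_of ?_ ?_⟩ <;>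
  · apply mem_TT_of <;> norm_num

lemma nonempty_23 : (TTlist [2, 3]).Nonempty := by
  refine ⟨(2/3, 3/5), pair_mem_of ?_ ?_⟩ <;>
  · apply mem_TT_of <;> norm_num

lemma nonempty_24 : (TTlist [2, 4]).Nonempty := by
  refine ⟨(11/12, 2/3), pair_mem_of ?_ ?_⟩ <;>
  · apply mem_TT_of <;> norm_num

/-- Classification of the empty regions 𝒯(k,m). -/
theorem TT_pair_empty_iff (k m : ℕ) (hk : 0 < k) (hm : 0 < m) :
    TTlist [k, m] = ∅ ↔
      (m = 1 ∧ k = 1) ∨ (m = 2 ∧ 5 ≤ k) ∨ ((m = 3 ∨ m = 4) ∧ 3 ≤ k) ∨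
        (5 ≤ m ∧ 2 ≤ k) := by
  constructor
  · intro h
    by_contra hc
    have hN : (m = 1 ∧ 2 ≤ k) ∨ (m = 2 ∧ 1 ≤ k ∧ k ≤ 4) ∨
        ((m = 3 ∨ m = 4) ∧ 1 ≤ k ∧ k ≤ 2) ∨ (5 ≤ m ∧ k = 1) := by omega
    have hne : (TTlist [k, m]).Nonempty := by
      rcases hN with ⟨hm1, hk2⟩ | ⟨hm2, hk1, hk4⟩ | ⟨hm34, hk1, hk2⟩ | ⟨hm5, hk1⟩
      · subst hm1; exact nonempty_m1 k hk2
      · subst hm2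
        interval_cases k
        · exact nonempty_k1 2 le_rfl
        · exact nonempty_22
        · exact nonempty_32
        · exact nonempty_42
      · rcases hm34 with hm3 | hm4
        · subst hm3
          interval_cases k
          · exact nonempty_k1 3 (by norm_num)
          · exact nonempty_23
        · subst hm4
          interval_cases k
          · exact nonempty_k1 4 (by norm_num)
          · exact nonempty_24
      · subst hk1; exact nonempty_k1 m (by omega)
    rw [h] at hne; exact Set.not_nonempty_empty hne
  · rintro (⟨hm1, hk1⟩ | ⟨hm2, hk5⟩ | ⟨hm34, hk3⟩ | ⟨hm5, hk2⟩)
    · subst hm1; subst hk1; exact empty_11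
    · subst hm2
      apply empty_of_ineq (by norm_num)
      have hk' : (5 : ℝ) ≤ (k : ℝ) := by exact_mod_cast hk5
      push_cast; nlinarith
    · have hk' : (3 : ℝ) ≤ (k : ℝ) := by exact_mod_cast hk3
      rcases hm34 with h3 | h4
      · subst h3; apply empty_of_ineq (by norm_num); push_cast; nlinarith
      · subst h4; apply empty_of_ineq (by norm_num); push_cast; nlinarith
    · apply empty_of_ineq (by omega)
      have hk' : (2 : ℝ) ≤ (k : ℝ) := by exact_mod_cast hk2
      have hm' : (5 : ℝ) ≤ (m : ℝ) := by exact_mod_cast hm5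
      have h1 : (0 : ℝ) ≤ ((m : ℝ) - 1) * ((m : ℝ) * k - 2 * m) := by
        apply mul_nonneg (by linarith)
        nlinarith
      nlinarith [h1, sq_nonneg ((m : ℝ) - 5)]
end

section
/- For positive integers k, m, n, the region 𝒯(k,m,n) is empty if and only if at least one of the following holds: (1) the pair (k,m) or the pair (m,n) satisfies one of: second entry 1 and first entry 1; second entry 2 and first entry ≥ 5; second entry in {3,4} and first entry ≥ 3; second entry ≥ 5 and first entry ≥ 2; (2a) m=1, k=2, 1 ≤ n ≤ 5; (2b) m=1, k=3, n ∉ {4,5,6,7,8}; (2c) m=1, k=4, n ∉ {3,4,5}; (2d) m=1, k=5, n ∉ {3,4}; (2e) m=1, 6 ≤ k ≤ 8, n ≥ 4; (2f) m=1, k ≥ 9, n ≥ 3; (3a) m=2, k=1, n ∉ {2,3,4}; (3b) m=2, k=2, n ≥ 4; (3c) m=2, k=3, n ≥ 3; (3d) m=2, k=4, n ≥ 2; (4a) m=3, k=1, n ≥ 3; (4b) m=3, k=2, n ≥ 3; (5a) m=4, k=1, n ≥ 3; (5b) m=4, k=2, n ≥ 2; (6) m ≥ 5, k=1, n ≥ 2.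 -/
open MeasureTheory

/-- The condition of Lemma 2: the pair (a,b) (first entry a, second entry b) makes 𝒯(a,b) empty. -/
def badPair (a b : ℕ) : Prop :=
  (b = 1 ∧ a = 1) ∨ (b = 2 ∧ 5 ≤ a) ∨ ((b = 3 ∨ b = 4) ∧ 3 ≤ a) ∨ (5 ≤ b ∧ 2 ≤ a)

/-!
Put `z = k y - x`. The floor condition `⌊(1 + x) / y⌋ = k` says exactly that `(y, z)` lies in the
Farey triangle, and then `T (x, y) = (y, z)`. Hence `(x, y) ∈ 𝒯(k, m, n)` iff there is a sequence
`x, y, z, w, v` with `x + z = k y`, `y + w = m z`, `z + v = n w` whose consecutive pairs all lie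
in `𝒯`: the region is a polygon cut out by linear inequalities. In each obstructed case these
inequalities are contradictory once `k y`, `m z`, `n w` are bounded using the admissible range of
`k`, `m`, `n`. Reading the sequence backwards swaps `k` and `n`, and up to this symmetry the
remaining triples are finitely many sporadic ones, for which rational points are exhibited, and
the two families `(2, 1, n)` with `n ≥ 6` and `(1, m, 1)` with `m ≥ 3`.
-/

theorem swap_mem_fareyTriangle {p : ℝ × ℝ} (hp : p ∈ fareyTriangle) : p.swap ∈ fareyTriangle := by
  obtain ⟨h₁, h₂, h₃, h₄, h₅⟩ := hp
  exact ⟨h₃, h₄, h₁, h₂, by simp only [Prod.fst_swap, Prod.snd_swap]; linarith⟩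

theorem mem_TT_iff {k : ℕ} {x y : ℝ} :
    (x, y) ∈ TT k ↔ (x, y) ∈ fareyTriangle ∧ (y, k * y - x) ∈ fareyTriangle := by
  simp only [TT, fareyTriangle, Set.mem_ofPred_eq]
  constructor
  · rintro ⟨⟨hx, hx1, hy, hy1, hxy⟩, hk⟩
    rw [Int.floor_eq_iff, le_div_iff₀ hy, div_lt_iff₀ hy] at hk
    push_cast at hk
    refine ⟨⟨hx, hx1, hy, hy1, hxy⟩, hy, hy1, ?_, ?_, ?_⟩ <;> linarith
  · rintro ⟨⟨hx, hx1, hy, hy1, hxy⟩, -, -, -, hz1, hyz⟩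
    refine ⟨⟨hx, hx1, hy, hy1, hxy⟩, ?_⟩
    rw [Int.floor_eq_iff, le_div_iff₀ hy, div_lt_iff₀ hy]
    push_cast
    constructor <;> linarith

theorem bcz_of_mem_TT {k : ℕ} {x y : ℝ} (h : (x, y) ∈ TT k) : bcz (x, y) = (y, k * y - x) := by
  simp [bcz, h.2]

theorem TTlist_nil : TTlist [] = Set.univ := by
  simp [TTlist]

theorem TTlist_cons (k : ℕ) (ks : List ℕ) : TTlist (k :: ks) = TT k ∩ bcz ⁻¹' TTlist ks := by
  ext p
  simp [TTlist, Fin.forall_fin_succ, Function.iterate_succ_apply]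

theorem mem_TTlist_cons_iff {k : ℕ} {ks : List ℕ} {x y : ℝ} :
    (x, y) ∈ TTlist (k :: ks) ↔ (x, y) ∈ TT k ∧ (y, k * y - x) ∈ TTlist ks := by
  rw [TTlist_cons, Set.mem_inter_iff, Set.mem_preimage, and_congr_right_iff]
  intro h
  rw [bcz_of_mem_TT h]

theorem mem_TTlist_triple_iff {k m n : ℕ} {x y : ℝ} :
    (x, y) ∈ TTlist [k, m, n] ↔ ∃ z w v : ℝ, x + z = k * y ∧ y + w = m * z ∧ z + v = n * w ∧
      (x, y) ∈ fareyTriangle ∧ (y, z) ∈ fareyTriangle ∧ (z, w) ∈ fareyTriangle ∧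
      (w, v) ∈ fareyTriangle := by
  simp only [mem_TTlist_cons_iff, mem_TT_iff, TTlist_nil, Set.mem_univ, and_true]
  constructor
  · rintro ⟨⟨h₀, h₁⟩, ⟨-, h₂⟩, -, h₃⟩
    exact ⟨_, _, _, by ring, by ring, by ring, h₀, h₁, h₂, h₃⟩
  · rintro ⟨z, w, v, hz, hw, hv, h₀, h₁, h₂, h₃⟩
    obtain rfl : z = k * y - x := by linarith
    obtain rfl : w = m * (k * y - x) - y := by linarith
    obtain rfl : v = n * (m * (k * y - x) - y) - (k * y - x) := by linarith
    exact ⟨⟨h₀, h₁⟩, ⟨h₁, h₂⟩, h₂, h₃⟩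

theorem natCast_mul_le_natCast_mul {a b : ℕ} {t : ℝ} (ht : 0 ≤ t) (hab : a ≤ b) :
    (a : ℝ) * t ≤ b * t := by
  gcongr

theorem not_badPair_of_chain {a b : ℕ} {x y z w : ℝ} (hz : x + z = a * y) (hw : y + w = b * z)
    (h₀ : (x, y) ∈ fareyTriangle) (h₁ : (y, z) ∈ fareyTriangle) (h₂ : (z, w) ∈ fareyTriangle) :
    ¬ badPair a b := by
  obtain ⟨hx, hx1, hy, hy1, hxy⟩ := h₀
  obtain ⟨-, -, hz0, hz1, hyz⟩ := h₁
  obtain ⟨-, -, hw0, hw1, hzw⟩ := h₂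
  dsimp only at *
  rintro (⟨rfl, rfl⟩ | ⟨rfl, ha⟩ | ⟨hb, ha⟩ | ⟨hb, ha⟩)
  · push_cast at *; linarith
  · have := natCast_mul_le_natCast_mul hy.le ha
    push_cast at *; linarith
  · have := natCast_mul_le_natCast_mul hy.le ha
    have := natCast_mul_le_natCast_mul hz0.le (show 3 ≤ b by omega)
    push_cast at *; linarith
  · have := natCast_mul_le_natCast_mul hy.le ha
    have := natCast_mul_le_natCast_mul hz0.le hb
    push_cast at *; linarith

def tripleObstruction (k m n : ℕ) : Prop :=
  (m = 1 ∧ k = 2 ∧ 1 ≤ n ∧ n ≤ 5) ∨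
  (m = 1 ∧ k = 3 ∧ ¬ (n = 4 ∨ n = 5 ∨ n = 6 ∨ n = 7 ∨ n = 8)) ∨
  (m = 1 ∧ k = 4 ∧ ¬ (n = 3 ∨ n = 4 ∨ n = 5)) ∨
  (m = 1 ∧ k = 5 ∧ ¬ (n = 3 ∨ n = 4)) ∨
  (m = 1 ∧ 6 ≤ k ∧ k ≤ 8 ∧ 4 ≤ n) ∨
  (m = 1 ∧ 9 ≤ k ∧ 3 ≤ n) ∨
  (m = 2 ∧ k = 1 ∧ ¬ (n = 2 ∨ n = 3 ∨ n = 4)) ∨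
  (m = 2 ∧ k = 2 ∧ 4 ≤ n) ∨
  (m = 2 ∧ k = 3 ∧ 3 ≤ n) ∨
  (m = 2 ∧ k = 4 ∧ 2 ≤ n) ∨
  (m = 3 ∧ k = 1 ∧ 3 ≤ n) ∨
  (m = 3 ∧ k = 2 ∧ 3 ≤ n) ∨
  (m = 4 ∧ k = 1 ∧ 3 ≤ n) ∨
  (m = 4 ∧ k = 2 ∧ 2 ≤ n) ∨
  (5 ≤ m ∧ k = 1 ∧ 2 ≤ n)

theorem not_tripleObstruction_of_chain {k m n : ℕ} {x y z w v : ℝ} (hz : x + z = k * y)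
    (hw : y + w = m * z) (hv : z + v = n * w) (h₀ : (x, y) ∈ fareyTriangle)
    (h₁ : (y, z) ∈ fareyTriangle) (h₂ : (z, w) ∈ fareyTriangle) (h₃ : (w, v) ∈ fareyTriangle) :
    ¬ tripleObstruction k m n := by
  obtain ⟨hx, hx1, hy, hy1, hxy⟩ := h₀
  obtain ⟨-, -, hz0, hz1, hyz⟩ := h₁
  obtain ⟨-, -, hw0, hw1, hzw⟩ := h₂
  obtain ⟨-, -, hv0, hv1, hwv⟩ := h₃
  dsimp only at *
  rintro (⟨rfl, rfl, -, hn⟩ | ⟨rfl, rfl, hn⟩ | ⟨rfl, rfl, hn⟩ | ⟨rfl, rfl, hn⟩ | ⟨rfl, hk, -, hn⟩ |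
    ⟨rfl, hk, hn⟩ | ⟨rfl, rfl, hn⟩ | ⟨rfl, rfl, hn⟩ | ⟨rfl, rfl, hn⟩ | ⟨rfl, rfl, hn⟩ |
    ⟨rfl, rfl, hn⟩ | ⟨rfl, rfl, hn⟩ | ⟨rfl, rfl, hn⟩ | ⟨rfl, rfl, hn⟩ | ⟨hm, rfl, hn⟩)
  · have := natCast_mul_le_natCast_mul hw0.le hn; push_cast at *; linarith
  · rcases (by omega : n ≤ 3 ∨ 9 ≤ n) with hn | hn <;>
    · have := natCast_mul_le_natCast_mul hw0.le hn; push_cast at *; linarith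
  · rcases (by omega : n ≤ 2 ∨ 6 ≤ n) with hn | hn <;>
    · have := natCast_mul_le_natCast_mul hw0.le hn; push_cast at *; linarith
  · rcases (by omega : n ≤ 2 ∨ 5 ≤ n) with hn | hn <;>
    · have := natCast_mul_le_natCast_mul hw0.le hn; push_cast at *; linarith
  · have := natCast_mul_le_natCast_mul hy.le hk
    have := natCast_mul_le_natCast_mul hw0.le hn; push_cast at *; linarith
  · have := natCast_mul_le_natCast_mul hy.le hk
    have := natCast_mul_le_natCast_mul hw0.le hn; push_cast at *; linarith
  · rcases (by omega : n ≤ 1 ∨ 5 ≤ n) with hn | hn <;>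
    · have := natCast_mul_le_natCast_mul hw0.le hn; push_cast at *; linarith
  · have := natCast_mul_le_natCast_mul hw0.le hn; push_cast at *; linarith
  · have := natCast_mul_le_natCast_mul hw0.le hn; push_cast at *; linarith
  · have := natCast_mul_le_natCast_mul hw0.le hn; push_cast at *; linarith
  · have := natCast_mul_le_natCast_mul hw0.le hn; push_cast at *; linarith
  · have := natCast_mul_le_natCast_mul hw0.le hn; push_cast at *; linarith
  · have := natCast_mul_le_natCast_mul hw0.le hn; push_cast at *; linarith
  · have := natCast_mul_le_natCast_mul hw0.le hn; push_cast at *; linarith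
  · have := natCast_mul_le_natCast_mul hz0.le hm
    have := natCast_mul_le_natCast_mul hw0.le hn; push_cast at *; linarith

theorem TTlist_eq_empty_of_obstructed {k m n : ℕ}
    (h : (badPair k m ∨ badPair m n) ∨ tripleObstruction k m n) : TTlist [k, m, n] = ∅ := by
  refine Set.eq_empty_iff_forall_notMem.2 fun ⟨x, y⟩ hxy => ?_
  obtain ⟨z, w, v, hz, hw, hv, h₀, h₁, h₂, h₃⟩ := mem_TTlist_triple_iff.1 hxy
  rcases h with (hkm | hmn) | hobs
  · exact not_badPair_of_chain hz hw h₀ h₁ h₂ hkm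
  · exact not_badPair_of_chain hw hv h₁ h₂ h₃ hmn
  · exact not_tripleObstruction_of_chain hz hw hv h₀ h₁ h₂ h₃ hobs

theorem TTlist_triple_reverse_nonempty {k m n : ℕ} (h : (TTlist [k, m, n]).Nonempty) :
    (TTlist [n, m, k]).Nonempty := by
  obtain ⟨⟨x, y⟩, hxy⟩ := h
  obtain ⟨z, w, v, hz, hw, hv, h₀, h₁, h₂, h₃⟩ := mem_TTlist_triple_iff.1 hxy
  exact ⟨(v, w), mem_TTlist_triple_iff.2 ⟨z, y, x, by linarith, by linarith, by linarith,
    swap_mem_fareyTriangle h₃, swap_mem_fareyTriangle h₂, swap_mem_fareyTriangle h₁,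
    swap_mem_fareyTriangle h₀⟩⟩

def sporadicTriples : Finset (ℕ × ℕ × ℕ) :=
  {(3, 1, 4), (3, 1, 5), (3, 1, 6), (3, 1, 7), (3, 1, 8), (4, 1, 4), (4, 1, 5), (1, 2, 2),
    (1, 2, 3), (1, 2, 4), (2, 2, 2), (2, 2, 3), (1, 3, 2), (2, 3, 2), (1, 4, 2)}

theorem TTlist_nonempty_of_mem_sporadicTriples {t : ℕ × ℕ × ℕ} (ht : t ∈ sporadicTriples) :
    (TTlist [t.1, t.2.1, t.2.2]).Nonempty := by
  simp only [Set.Nonempty, Prod.exists, mem_TTlist_cons_iff, mem_TT_iff, TTlist_nil,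
    Set.mem_univ, and_true]
  fin_cases ht
  exacts [⟨7/12, 1/2, by norm_num [fareyTriangle]⟩, ⟨2/3, 1/2, by norm_num [fareyTriangle]⟩,
    ⟨1, 2/3, by norm_num [fareyTriangle]⟩, ⟨1, 5/8, by norm_num [fareyTriangle]⟩,
    ⟨47/48, 29/48, by norm_num [fareyTriangle]⟩, ⟨1, 1/2, by norm_num [fareyTriangle]⟩,
    ⟨11/12, 5/12, by norm_num [fareyTriangle]⟩, ⟨1/6, 1, by norm_num [fareyTriangle]⟩,
    ⟨1/4, 1, by norm_num [fareyTriangle]⟩, ⟨1/4, 11/12, by norm_num [fareyTriangle]⟩,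
    ⟨1, 1, by norm_num [fareyTriangle]⟩, ⟨1, 5/6, by norm_num [fareyTriangle]⟩,
    ⟨1/3, 5/6, by norm_num [fareyTriangle]⟩, ⟨1, 3/4, by norm_num [fareyTriangle]⟩,
    ⟨7/12, 1, by norm_num [fareyTriangle]⟩]

theorem TTlist_two_one_n_nonempty {n : ℕ} (hn : 6 ≤ n) : (TTlist [2, 1, n]).Nonempty := by
  have hn' : (6 : ℝ) ≤ n := by exact_mod_cast hn
  set t : ℝ := 4 / (2 * n + 1) with ht
  have htn : n * t = 2 - t / 2 := by rw [ht]; field_simp; ring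
  have ht0 : 0 < t := by positivity
  have ht3 : t < 1 / 3 := by rw [ht, div_lt_iff₀ (by positivity)]; linarith
  refine ⟨(1 - 2 * t, 1 - t), mem_TTlist_triple_iff.2 ⟨1, t, 1 - t / 2, ?_⟩⟩
  simp only [fareyTriangle, Set.mem_ofPred_eq, Nat.cast_ofNat, Nat.cast_one]
  refine ⟨by ring, by ring, by linarith, ?_⟩
  constructorm* _ ∧ _ <;> linarith

theorem TTlist_one_m_one_nonempty {m : ℕ} (hm : 3 ≤ m) : (TTlist [1, m, 1]).Nonempty := by
  have hm' : (3 : ℝ) ≤ m := by exact_mod_cast hm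
  set s : ℝ := 1 / m with hs
  have hms : m * s = 1 := by rw [hs]; field_simp
  have hs0 : 0 < s := by positivity
  have hs2 : s < 1 / 2 := by rw [hs, div_lt_div_iff₀ (by positivity) (by norm_num)]; linarith
  refine ⟨(1 - 2 * s, 1), mem_TTlist_triple_iff.2 ⟨2 * s, 1, 1 - 2 * s, ?_⟩⟩
  simp only [fareyTriangle, Set.mem_ofPred_eq, Nat.cast_one]
  refine ⟨by ring, by linear_combination -2 * hms, by ring, ?_⟩
  constructorm* _ ∧ _ <;> linarith

theorem unobstructed_cases {k m n : ℕ} (hk : 0 < k) (hm : 0 < m) (hn : 0 < n)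
    (h : ¬ ((badPair k m ∨ badPair m n) ∨ tripleObstruction k m n)) :
    (k, m, n) ∈ sporadicTriples ∨ (n, m, k) ∈ sporadicTriples ∨ (k = 2 ∧ m = 1 ∧ 6 ≤ n) ∨
      (n = 2 ∧ m = 1 ∧ 6 ≤ k) ∨ (k = 1 ∧ 3 ≤ m ∧ n = 1) := by
  rcases le_or_gt m 4 with hm4 | hm5
  · rcases le_or_gt k 8 with hk8 | hk9
    · interval_cases m <;> interval_cases k <;>
        simp [badPair, tripleObstruction, sporadicTriples] at h ⊢ <;> omega
    · obtain ⟨k, rfl⟩ : ∃ j, k = j + 9 := Nat.exists_eq_add_of_le' hk9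
      interval_cases m <;> simp [badPair, tripleObstruction, sporadicTriples] at h ⊢
      omega
  · obtain ⟨m, rfl⟩ : ∃ j, m = j + 5 := Nat.exists_eq_add_of_le' hm5
    simp [badPair, tripleObstruction, sporadicTriples] at h ⊢
    omega

theorem TTlist_nonempty_of_unobstructed {k m n : ℕ} (hk : 0 < k) (hm : 0 < m) (hn : 0 < n)
    (h : ¬ ((badPair k m ∨ badPair m n) ∨ tripleObstruction k m n)) :
    (TTlist [k, m, n]).Nonempty := by
  rcases unobstructed_cases hk hm hn h with
    hs | hs | ⟨rfl, rfl, hn6⟩ | ⟨rfl, rfl, hk6⟩ | ⟨rfl, hm3, rfl⟩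
  · exact TTlist_nonempty_of_mem_sporadicTriples hs
  · exact TTlist_triple_reverse_nonempty (TTlist_nonempty_of_mem_sporadicTriples hs)
  · exact TTlist_two_one_n_nonempty hn6
  · exact TTlist_triple_reverse_nonempty (TTlist_two_one_n_nonempty hk6)
  · exact TTlist_one_m_one_nonempty hm3

/-- Classification of the empty regions 𝒯(k,m,n). -/
theorem TT_triple_empty_iff (k m n : ℕ) (hk : 0 < k) (hm : 0 < m) (hn : 0 < n) :
    TTlist [k, m, n] = ∅ ↔
      (badPair k m ∨ badPair m n) ∨
      (m = 1 ∧ k = 2 ∧ 1 ≤ n ∧ n ≤ 5) ∨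
      (m = 1 ∧ k = 3 ∧ ¬ (n = 4 ∨ n = 5 ∨ n = 6 ∨ n = 7 ∨ n = 8)) ∨
      (m = 1 ∧ k = 4 ∧ ¬ (n = 3 ∨ n = 4 ∨ n = 5)) ∨
      (m = 1 ∧ k = 5 ∧ ¬ (n = 3 ∨ n = 4)) ∨
      (m = 1 ∧ 6 ≤ k ∧ k ≤ 8 ∧ 4 ≤ n) ∨
      (m = 1 ∧ 9 ≤ k ∧ 3 ≤ n) ∨
      (m = 2 ∧ k = 1 ∧ ¬ (n = 2 ∨ n = 3 ∨ n = 4)) ∨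
      (m = 2 ∧ k = 2 ∧ 4 ≤ n) ∨
      (m = 2 ∧ k = 3 ∧ 3 ≤ n) ∨
      (m = 2 ∧ k = 4 ∧ 2 ≤ n) ∨
      (m = 3 ∧ k = 1 ∧ 3 ≤ n) ∨
      (m = 3 ∧ k = 2 ∧ 3 ≤ n) ∨
      (m = 4 ∧ k = 1 ∧ 3 ≤ n) ∨
      (m = 4 ∧ k = 2 ∧ 2 ≤ n) ∨
      (5 ≤ m ∧ k = 1 ∧ 2 ≤ n) :=
  ⟨fun h => by_contra fun hc => (TTlist_nonempty_of_unobstructed hk hm hn hc).ne_empty h,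
    TTlist_eq_empty_of_obstructed⟩
end

section
/- For every integer n ≥ 2 and every positive integer k, the region 𝒯(3,2ⁿ,k) (the tuple 3, followed by n entries equal to 2, followed by k) is empty for k ≥ 3 and nonempty for k ∈ {1,2}. -/
open MeasureTheory

lemma floor_helper (u v : ℝ) (hv : 0 < v) (m : ℤ) (h1 : m*v ≤ 1+u) (h2 : 1+u < (m+1)*v) :
    ⌊(1+u)/v⌋ = m := by
  rw [Int.floor_eq_iff]
  constructor
  · rw [le_div_iff₀ hv]; exact h1
  · rw [div_lt_iff₀ hv]; linarith

lemma bcz_eval (x y : ℝ) (m : ℤ) (h : ⌊(1+x)/y⌋ = m) : bcz (x,y) = (y, m*y - x) := by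
  simp [bcz, h]

lemma iter_expl (a d : ℝ) (n : ℕ)
    (H : ∀ j : ℕ, j < n → ⌊(1 + (a + j*d)) / (a + (j+1)*d)⌋ = 2) :
    ∀ i : ℕ, i ≤ n → bcz^[i] (a, a + d) = (a + i*d, a + (i+1)*d) := by
  intro i
  induction i with
  | zero => intro _; norm_num
  | succ j ih =>
      intro h
      rw [Function.iterate_succ_apply', ih (by omega)]
      rw [bcz_eval _ _ 2 (H j (by omega))]
      push_cast
      rw [Prod.mk.injEq]; exact ⟨by ring, by ring⟩

lemma iter_orbit (p : ℝ × ℝ) (a d : ℝ) (hp : bcz p = (a, a + d)) (n : ℕ)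
    (H : ∀ j : ℕ, j < n → ⌊(1 + (bcz^[j+1] p).1) / (bcz^[j+1] p).2⌋ = 2) :
    ∀ i : ℕ, i ≤ n → bcz^[i+1] p = (a + i*d, a + (i+1)*d) := by
  intro i
  induction i with
  | zero => intro _; simpa using hp
  | succ j ih =>
      intro h
      have e := ih (by omega)
      have hf := H j (by omega)
      rw [e] at hf
      rw [show j+1+1 = (j+1)+1 from rfl, Function.iterate_succ_apply', e]
      rw [bcz_eval _ _ 2 (by exact_mod_cast hf)]
      push_cast
      rw [Prod.mk.injEq]; exact ⟨by ring, by ring⟩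

lemma ks_len (n k : ℕ) : (3 :: (List.replicate n 2 ++ [k])).length = n + 2 := by simp

lemma ks_get (n k : ℕ) (i : ℕ) (hi : i < (3 :: (List.replicate n 2 ++ [k])).length) :
    (3 :: (List.replicate n 2 ++ [k])).get ⟨i, hi⟩ =
      if i = 0 then 3 else if i ≤ n then 2 else k := by
  rw [ks_len] at hi
  rcases i with _ | j
  · simp
  · rw [if_neg (by omega)]
    simp only [List.get_eq_getElem, List.getElem_cons_succ]
    by_cases hj : j < n
    · rw [if_pos (by omega)]
      rw [List.getElem_append_left (by simpa using hj)]
      simp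
    · rw [if_neg (by omega)]
      have hjn : j = n := by omega
      subst hjn
      rw [List.getElem_append_right (by simp)]
      simp

set_option maxHeartbeats 1000000 in
/-- For n ≥ 2, the region 𝒯(3,2ⁿ,k) is empty for k ≥ 3 and nonempty for k ∈ {1,2}. -/
theorem TT_three_twos_k (n : ℕ) (hn : 2 ≤ n) (k : ℕ) (hk : 0 < k) :
    (3 ≤ k → TTlist (3 :: (List.replicate n 2 ++ [k])) = ∅) ∧
    ((k = 1 ∨ k = 2) → (TTlist (3 :: (List.replicate n 2 ++ [k]))).Nonempty) := by
  constructor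
  · -- emptiness for k ≥ 3
    intro hk3
    ext p
    simp only [Set.mem_empty_iff_false, iff_false]
    intro hp
    rw [TTlist, Set.mem_iInter] at hp
    have mem : ∀ i : ℕ, (hi : i < (3 :: (List.replicate n 2 ++ [k])).length) →
        bcz^[i] p ∈ TT (if i = 0 then 3 else if i ≤ n then 2 else k) := by
      intro i hi
      have := hp ⟨i, hi⟩
      rwa [ks_get] at this
    have h0 := mem 0 (by rw [ks_len]; omega)
    rw [if_pos rfl] at h0
    simp only [Function.iterate_zero_apply] at h0
    obtain ⟨⟨hx0, hx1, hy0, hy1, hxy⟩, hf0⟩ := h0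
    have hfb := Int.floor_eq_iff.mp hf0
    have h3y : 3 * p.2 ≤ 1 + p.1 := by
      have := hfb.1
      rw [le_div_iff₀ hy0] at this
      push_cast at this; linarith
    have h4y : 1 + p.1 < 4 * p.2 := by
      have := hfb.2
      rw [div_lt_iff₀ hy0] at this
      push_cast at this; linarith
    set d := 2 * p.2 - p.1 with hddef
    have hd : 0 < d := by simp only [hddef]; nlinarith
    have hbp : bcz p = (p.2, p.2 + d) := by
      have := bcz_eval p.1 p.2 3 hf0
      rw [Prod.mk.eta] at this
      rw [this, Prod.mk.injEq]
      constructor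
      · rfl
      · push_cast; ring
    have Hfl : ∀ j : ℕ, j < n → ⌊(1 + (bcz^[j+1] p).1) / (bcz^[j+1] p).2⌋ = 2 := by
      intro j hj
      have h := mem (j+1) (by rw [ks_len]; omega)
      rw [if_neg (by omega), if_pos (by omega)] at h
      exact_mod_cast h.2
    have orb := iter_orbit p p.2 d hbp n Hfl
    have q1 := orb 0 (by omega)
    have h1mem := mem 1 (by rw [ks_len]; omega)
    rw [if_neg (by omega), if_pos (by omega)] at h1mem
    rw [show (1:ℕ) = 0 + 1 from rfl, q1] at h1mem
    obtain ⟨⟨_, _, hv1, _, _⟩, hfl1⟩ := h1mem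
    simp only at hv1 hfl1
    have h1lt : 1 + (p.2 + 0*d) < 3 * (p.2 + (0+1)*d) := by
      have := (Int.floor_eq_iff.mp hfl1).2
      rw [div_lt_iff₀ hv1] at this
      push_cast at this
      push_cast
      linarith
    have qn := orb n le_rfl
    have hfin := mem (n+1) (by rw [ks_len]; omega)
    rw [if_neg (by omega), if_neg (by omega), qn] at hfin
    obtain ⟨⟨_, _, hvn, _, _⟩, hfln⟩ := hfin
    simp only at hvn hfln
    have hkle : (k:ℝ) * (p.2 + ((n:ℝ)+1)*d) ≤ 1 + (p.2 + (n:ℝ)*d) := by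
      have := (Int.floor_eq_iff.mp hfln).1
      rw [le_div_iff₀ hvn] at this
      push_cast at this
      linarith
    have hk3' : (3:ℝ) ≤ (k:ℝ) := by exact_mod_cast hk3
    have h3le : (3:ℝ) * (p.2 + ((n:ℝ)+1)*d) ≤ (k:ℝ) * (p.2 + ((n:ℝ)+1)*d) :=
      mul_le_mul_of_nonneg_right hk3' hvn.le
    have hnd : 0 ≤ (n:ℝ) * d := by positivity
    push_cast at h1lt
    linarith
  · -- nonemptiness for k ∈ {1,2}
    intro hke
    have hK1 : (1:ℝ) ≤ (k:ℝ) := by rcases hke with rfl | rfl <;> norm_num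
    have hK2 : (k:ℝ) ≤ 2 := by rcases hke with rfl | rfl <;> norm_num
    have hn2 : (2:ℝ) ≤ (n:ℝ) := by exact_mod_cast hn
    have hden : 0 < 2 * ((n:ℝ) + (k:ℝ)) := by linarith
    obtain ⟨d, hd, hdd, hdle⟩ : ∃ d : ℝ, 0 < d ∧ 2 * ((n:ℝ) + (k:ℝ)) * d = 1 ∧ d ≤ 1/6 := by
      refine ⟨1 / (2 * ((n:ℝ) + (k:ℝ))), by positivity, by field_simp, ?_⟩
      rw [div_le_div_iff₀ hden (by norm_num)]
      linarith
    refine ⟨(1 - d, 1/2), ?_⟩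
    rw [TTlist, Set.mem_iInter]
    -- first step
    have hf0 : ⌊(1 + (1 - d)) / (1/2 : ℝ)⌋ = 3 := by
      apply floor_helper _ _ (by norm_num)
      · push_cast; linarith
      · push_cast; linarith
    have hbp : bcz (1 - d, 1/2) = ((1:ℝ)/2, 1/2 + d) := by
      rw [bcz_eval _ _ 3 hf0, Prod.mk.injEq]
      constructor
      · rfl
      · push_cast; ring
    -- floors of 2 along the chain
    have H : ∀ j : ℕ, j < n → ⌊(1 + ((1:ℝ)/2 + j*d)) / (1/2 + (j+1)*d)⌋ = 2 := by
      intro j hj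
      have hjr : (j:ℝ) + 1 ≤ (n:ℝ) := by exact_mod_cast hj
      apply floor_helper _ _ (by positivity)
      · push_cast
        nlinarith
      · push_cast
        nlinarith
    have orb := iter_expl (1/2) d n H
    intro i
    obtain ⟨i, hi⟩ := i
    have hi' : i < n + 2 := by rwa [ks_len] at hi
    simp only
    rw [ks_get n k i hi]
    rw [Set.mem_preimage]
    rcases i with _ | j
    · rw [if_pos rfl]
      simp only [Function.iterate_zero_apply]
      refine ⟨⟨by linarith, by linarith, by norm_num, by norm_num, by simp; linarith⟩, ?_⟩
      exact_mod_cast hf0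
    · rw [if_neg (by omega)]
      have hjle : j ≤ n := by omega
      have hjr : (j:ℝ) ≤ (n:ℝ) := by exact_mod_cast hjle
      have horbj : bcz^[j+1] (1 - d, 1/2) = ((1:ℝ)/2 + j*d, 1/2 + (j+1)*d) := by
        rw [Function.iterate_succ_apply, hbp, orb j hjle]
      rw [horbj]
      have hxb : ((j:ℝ))*d ≤ 1/2 := by nlinarith
      have hyb : ((j:ℝ)+1)*d ≤ 1/2 := by nlinarith
      have hfarey : ((1:ℝ)/2 + j*d, 1/2 + (j+1)*d) ∈ fareyTriangle := by
        refine ⟨by positivity, by simp; linarith, by positivity, by simp; linarith, by simp; nlinarith⟩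
      by_cases hj : j < n
      · rw [if_pos (by omega)]
        exact ⟨hfarey, by exact_mod_cast H j hj⟩
      · rw [if_neg (by omega)]
        have hjn : j = n := by omega
        subst hjn
        refine ⟨hfarey, ?_⟩
        rcases hke with rfl | rfl
        · push_cast at hdd ⊢
          apply floor_helper _ _ (by positivity)
          · push_cast; nlinarith
          · push_cast; nlinarith
        · push_cast at hdd ⊢
          apply floor_helper _ _ (by positivity)
          · push_cast; nlinarith
          · push_cast; nlinarith
end

section
/- For every integer n ≥ 1 and every positive integer k, the region 𝒯(k,1,2ⁿ) (the tuple k, then 1, then n entries equal to 2) is nonempty if and only if k ≥ 4n+2. -/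
open MeasureTheory

set_option maxHeartbeats 1000000

lemma floor_char {x y : ℝ} (hy : 0 < y) (m : ℤ) :
    ⌊(1 + x) / y⌋ = m ↔ (m : ℝ) * y ≤ 1 + x ∧ 1 + x < ((m : ℝ) + 1) * y := by
  rw [Int.floor_eq_iff, le_div_iff₀ hy, div_lt_iff₀ hy]

lemma mem_TT_iff_s13 {p : ℝ × ℝ} {m : ℕ} :
    p ∈ TT m ↔ (0 < p.1 ∧ p.1 ≤ 1 ∧ 0 < p.2 ∧ p.2 ≤ 1 ∧ 1 < p.1 + p.2) ∧
      (m : ℝ) * p.2 ≤ 1 + p.1 ∧ 1 + p.1 < ((m : ℝ) + 1) * p.2 := by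
  constructor
  · rintro ⟨hf, hfl⟩
    have hy := hf.2.2.1
    rw [floor_char hy] at hfl
    push_cast at hfl
    exact ⟨hf, hfl⟩
  · rintro ⟨hf, h1, h2⟩
    refine ⟨hf, ?_⟩
    rw [floor_char hf.2.2.1]
    push_cast
    exact ⟨h1, h2⟩

lemma bcz_of_mem_s13 {p : ℝ × ℝ} {m : ℕ} (h : p ∈ TT m) :
    bcz p = (p.2, (m : ℝ) * p.2 - p.1) := by
  obtain ⟨_, hfl⟩ := h
  simp [bcz, hfl]

/-- For n ≥ 1, the region 𝒯(k,1,2ⁿ) is nonempty iff k ≥ 4n+2. -/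
theorem TT_k_one_twos_nonempty_iff (n : ℕ) (hn : 1 ≤ n) (k : ℕ) (hk : 0 < k) :
    (TTlist (k :: 1 :: List.replicate n 2)).Nonempty ↔ 4 * n + 2 ≤ k := by
  constructor
  · -- forward direction
    rintro ⟨p, hp⟩
    have hmem : ∀ i : Fin (k :: 1 :: List.replicate n 2).length,
        bcz^[i.1] p ∈ TT ((k :: 1 :: List.replicate n 2).get i) :=
      fun i => Set.mem_iInter.mp hp i
    have h0 : p ∈ TT k := by
      have := hmem ⟨0, by simp only [List.length_cons, List.length_replicate]; omega⟩
      simpa using this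
    have h1 : bcz p ∈ TT 1 := by
      have := hmem ⟨1, by simp only [List.length_cons, List.length_replicate]; omega⟩
      simpa using this
    have h2 : ∀ j, j < n → bcz^[j + 2] p ∈ TT 2 := by
      intro j hj
      have := hmem ⟨j + 2, by simp only [List.length_cons, List.length_replicate]; omega⟩
      simpa using this
    obtain ⟨hf0, hl0, hr0⟩ := mem_TT_iff_s13.mp h0
    set x := p.1 with hx
    set y := p.2 with hy
    set z : ℝ := (k : ℝ) * y - x with hz
    have b1 : bcz p = (y, z) := bcz_of_mem_s13 h0
    rw [b1] at h1
    have hz1 : z ≤ 1 := (mem_TT_iff_s13.mp h1).1.2.2.2.1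
    have b2 : bcz^[2] p = (z, z - y) := by
      rw [show (2:ℕ) = 1 + 1 from rfl, Function.iterate_succ_apply, Function.iterate_one, b1,
        bcz_of_mem_s13 h1]
      norm_num
    have orbit : ∀ j, j < n → bcz^[j + 2] p = (z - (j : ℝ) * y, z - ((j : ℝ) + 1) * y) := by
      intro j
      induction j with
      | zero => intro _; rw [b2]; norm_num
      | succ j ih =>
        intro hj
        have hj' : j < n := by omega
        have hmem2 := h2 j hj'
        rw [ih hj'] at hmem2
        have hit : bcz^[j + 1 + 2] p = bcz (bcz^[j + 2] p) := by
          rw [show j + 1 + 2 = (j + 2) + 1 by omega, Function.iterate_succ_apply']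
        rw [hit, ih hj', bcz_of_mem_s13 hmem2]
        simp only [Prod.mk.injEq]
        constructor
        · push_cast; ring
        · push_cast; ring
    obtain ⟨m, rfl⟩ : ∃ m, n = m + 1 := ⟨n - 1, by omega⟩
    have hlast := h2 m (by omega)
    rw [orbit m (by omega)] at hlast
    obtain ⟨hfL, hlL, hrL⟩ := mem_TT_iff_s13.mp hlast
    dsimp only at hlL hrL
    have hy0 : 0 < y := hf0.2.2.1
    have hxy : 1 < x + y := hf0.2.2.2.2
    by_contra hcon
    have hk' : (k : ℝ) ≤ 4 * (m : ℝ) + 5 := by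
      have h' : k ≤ 4 * m + 5 := by omega
      exact_mod_cast h'
    have hky : (k : ℝ) * y ≤ (4 * (m : ℝ) + 5) * y :=
      mul_le_mul_of_nonneg_right hk' hy0.le
    push_cast at hrL
    linarith [hrL, hz1, hxy, hky, hy0]
  · -- backward direction
    intro hkn
    set K : ℝ := (k : ℝ) with hKdef
    have hN1 : (1 : ℝ) ≤ (n : ℝ) := by exact_mod_cast hn
    have hK4 : 4 * (n : ℝ) + 2 ≤ K := by rw [hKdef]; exact_mod_cast hkn
    have hK0 : (0 : ℝ) < K := by linarith
    have hK1 : (0 : ℝ) < K + 1 := by linarith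
    set y : ℝ := (2 * K + 1) / (K * (K + 1)) with hy_def
    set x : ℝ := K / (K + 1) with hx_def
    have hy0 : 0 < y := div_pos (by linarith) (by positivity)
    have hyN : (2 * (n : ℝ) + 1) * y < 1 := by
      rw [hy_def, ← mul_div_assoc, div_lt_one (by positivity)]
      nlinarith [mul_nonneg (sub_nonneg.2 hK4) (by linarith : (0:ℝ) ≤ (n:ℝ)),
        sq_nonneg (K - 4 * (n : ℝ) - 2)]
    have hy1 : y < 1 := by
      nlinarith [hyN, hy0, mul_le_mul_of_nonneg_right hN1 hy0.le]
    have hKy : K * y = 1 + x := by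
      rw [hy_def, hx_def]
      field_simp
      ring
    have hx0 : 0 < x := div_pos hK0 hK1
    have hx1 : x ≤ 1 := by rw [hx_def, div_le_one hK1]; linarith
    have hxy : 1 < x + y := by
      have hsum : x + y = 1 + 1 / K := by rw [hx_def, hy_def]; field_simp; ring
      have : 0 < 1 / K := by positivity
      linarith
    have h0 : (x, y) ∈ TT k := by
      refine mem_TT_iff_s13.2 ⟨⟨hx0, hx1, hy0, hy1.le, hxy⟩, ?_, ?_⟩
      · exact le_of_eq hKy
      · calc 1 + x = K * y := hKy.symm
          _ < (K + 1) * y := by nlinarith [hy0]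
    have b1 : bcz (x, y) = (y, 1) := by
      rw [bcz_of_mem_s13 h0]
      simp only [Prod.mk.injEq]
      refine ⟨by trivial, ?_⟩
      show (k : ℝ) * y - x = 1
      rw [← hKdef]
      linarith [hKy]
    have h1 : ((y, (1:ℝ)) : ℝ × ℝ) ∈ TT 1 := by
      refine mem_TT_iff_s13.2 ⟨⟨hy0, hy1.le, one_pos, le_refl 1, ?_⟩, ?_, ?_⟩
      · show (1:ℝ) < y + 1; linarith
      · show ((1:ℕ):ℝ) * 1 ≤ 1 + y; push_cast; linarith
      · show 1 + y < (((1:ℕ):ℝ) + 1) * 1; push_cast; linarith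
    have mem2 : ∀ j : ℕ, j + 1 ≤ n →
        ((1 - (j : ℝ) * y, 1 - ((j : ℝ) + 1) * y) : ℝ × ℝ) ∈ TT 2 := by
      intro j hj
      have hJ : (j : ℝ) + 1 ≤ (n : ℝ) := by exact_mod_cast hj
      have hjy : 0 ≤ (j : ℝ) * y := mul_nonneg (Nat.cast_nonneg j) hy0.le
      have h2j : (2 * (j : ℝ) + 3) * y < 1 :=
        lt_of_le_of_lt (mul_le_mul_of_nonneg_right (by linarith) hy0.le) hyN
      refine mem_TT_iff_s13.2 ⟨⟨?_, ?_, ?_, ?_, ?_⟩, ?_, ?_⟩ <;> dsimp only <;> push_cast <;> linarith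
    have orbit : ∀ j : ℕ, j + 1 ≤ n →
        bcz^[j + 2] (x, y) = (1 - (j : ℝ) * y, 1 - ((j : ℝ) + 1) * y) := by
      intro j
      induction j with
      | zero =>
        intro _
        rw [show (0:ℕ) + 2 = 1 + 1 from rfl, Function.iterate_succ_apply,
          Function.iterate_one, b1, bcz_of_mem_s13 h1]
        norm_num
      | succ j ih =>
        intro hj
        have hj' : j + 1 ≤ n := by omega
        rw [show j + 1 + 2 = (j + 2) + 1 by omega, Function.iterate_succ_apply', ih hj',
          bcz_of_mem_s13 (mem2 j hj')]
        simp only [Prod.mk.injEq]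
        constructor
        · push_cast; ring
        · push_cast; ring
    refine ⟨(x, y), ?_⟩
    apply Set.mem_iInter.2
    rintro ⟨i, hi⟩
    match i, hi with
    | 0, hi => simpa using h0
    | 1, hi => simpa [b1] using h1
    | (j + 2), hi =>
      have hj : j + 1 ≤ n := by
        have : j + 2 < n + 2 := by
          simpa only [List.length_cons, List.length_replicate] using hi
        omega
      have hget : (k :: 1 :: List.replicate n 2).get ⟨j + 2, hi⟩ = 2 := by
        simp
      simp only [hget]
      show bcz^[j + 2] (x, y) ∈ TT 2
      rw [orbit j hj]
      exact mem2 j hj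
end
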